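/- If G is a graph with maximum degree Δ(G) ≤ 3, then G is edge-(Δ(G)+1)-group choosable; if Δ(G) = 4, then G is edge-6-group choosable. -/

import Mathlib

open SimpleGraph

/-- A graph `H` is `k`-group choosable if for every (additive) Abelian group `A` of order at
least `k`, every list assignment giving each vertex a `k`-element subset of `A`, and every
"forbidden difference" function `f` on oriented edges (encoded as an antisymmetric function
on ordered pairs of vertices, which is equivalent to fixing an orientation), there is a list
coloring `c` with `c x - c y ≠ f x y` for every edge `xy`. -/
def GroupChoosable {W : Type} (H : SimpleGraph W) (k : ℕ) : Prop :=
  ∀ (A : Type) [AddCommGroup A] [Fintype A], k ≤ Fintype.card A →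
    ∀ L : W → Finset A, (∀ v, (L v).card = k) →
      ∀ f : W → W → A, (∀ x y, f x y = - f y x) →
        ∃ c : W → A, (∀ v, c v ∈ L v) ∧ ∀ ⦃x y⦄, H.Adj x y → c x - c y ≠ f x y

/-- The group choice number of a graph: the least `k` such that it is `k`-group choosable. -/
noncomputable def groupChoiceNumber {W : Type} (H : SimpleGraph W) : ℕ :=
  sInf {k | GroupChoosable H k}

/-- `G` is edge-`k`-group choosable if its line graph is `k`-group choosable. -/
def EdgeGroupChoosable {V : Type} (G : SimpleGraph V) (k : ℕ) : Prop :=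
  GroupChoosable G.lineGraph k

/-- The group-choice index of `G`: the group choice number of its line graph. -/
noncomputable def groupChoiceIndex {V : Type} (G : SimpleGraph V) : ℕ :=
  groupChoiceNumber G.lineGraph


/-!
A line graph of a graph of maximum degree `Δ` has maximum degree at most `2Δ - 2`, and a clique
in it is a triangle or a star, so it has at most `max 3 Δ` vertices. For `Δ ≤ 2` this leaves a
spare colour at every vertex and greedy colouring works. For `Δ ∈ {3, 4}` we prove the group
colouring version of Brooks' theorem: a graph of maximum degree `k ≥ 3` without a `(k+1)`-clique is
`k`-group choosable.

Colouring greedily towards a vertex with a spare colour handles every component that has one. In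
a 2-connected, `k`-regular, non-complete component, Lovász's lemma gives a vertex `v` with
non-adjacent neighbours `p`, `q` such that removing `p` and `q` keeps the rest connected; `p` and
`q` can be coloured so that together they forbid at most one colour at `v`, which then becomes
the spare vertex for the rest. If there is a cut vertex, take an end block `B` attached at `z`:
the colours of `z` that extend to a colouring of the graph outside `B \ {z}` are at least
`deg_B z` many, so colouring `B` with these colours at `z` is again the 2-connected case.
-/

open Finset

namespace SimpleGraph

section Reachability

variable {W : Type*} (H : SimpleGraph W)

def ReachIn (s : Finset W) (x y : W) : Prop :=
  x ∈ s ∧ Relation.ReflTransGen (fun a b => a ∈ s ∧ b ∈ s ∧ H.Adj a b) x y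

def PreconnectedOn (s : Finset W) : Prop :=
  ∀ x ∈ s, ∀ y ∈ s, H.ReachIn s x y

def NoCutVertexOn [DecidableEq W] (s : Finset W) : Prop :=
  ∀ z ∈ s, H.PreconnectedOn (s.erase z)

open Classical in
noncomputable def componentIn (s : Finset W) (a : W) : Finset W :=
  s.filter (H.ReachIn s a)

def degreeIn [DecidableRel H.Adj] (s : Finset W) (v : W) : ℕ :=
  (s.filter (H.Adj v)).card

variable {H} {s t E : Finset W} {a x y z : W}

namespace ReachIn

theorem refl (hx : x ∈ s) : H.ReachIn s x x := ⟨hx, .refl⟩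

theorem right_mem (h : H.ReachIn s x y) : y ∈ s := by
  obtain ⟨hx, h⟩ := h
  cases h.cases_tail with
  | inl h => exact h ▸ hx
  | inr h => obtain ⟨_, _, _, hy, _⟩ := h; exact hy

theorem of_adj (hx : x ∈ s) (hy : y ∈ s) (hxy : H.Adj x y) : H.ReachIn s x y :=
  ⟨hx, .single ⟨hx, hy, hxy⟩⟩

theorem trans (h : H.ReachIn s x y) (h' : H.ReachIn s y z) : H.ReachIn s x z :=
  ⟨h.1, h.2.trans h'.2⟩

theorem symm (h : H.ReachIn s x y) : H.ReachIn s y x :=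
  ⟨h.right_mem, Relation.ReflTransGen.mono (fun _ _ ⟨ha, hb, hab⟩ => ⟨hb, ha, hab.symm⟩) _ _
    (Relation.ReflTransGen.swap _ _ h.2)⟩

theorem mono (hst : s ⊆ t) (h : H.ReachIn s x y) : H.ReachIn t x y :=
  ⟨hst h.1, Relation.ReflTransGen.mono (fun _ _ ⟨ha, hb, hab⟩ => ⟨hst ha, hst hb, hab⟩) _ _ h.2⟩

theorem mem_of_closed (hE : ∀ a ∈ E, ∀ b ∈ s, H.Adj a b → b ∈ E) (h : H.ReachIn s x y)
    (hx : x ∈ E) : y ∈ E := by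
  obtain ⟨-, h⟩ := h
  induction h with
  | refl => exact hx
  | tail _ hbc ih => exact hE _ ih _ hbc.2.1 hbc.2.2

theorem erase_or_exists_adj [DecidableEq W] (h : H.ReachIn s x y) (hxz : x ≠ z) :
    H.ReachIn (s.erase z) x y ∨ ∃ w, H.Adj w z ∧ H.ReachIn (s.erase z) x w := by
  obtain ⟨hx, h⟩ := h
  induction h with
  | refl => exact .inl (refl (mem_erase.2 ⟨hxz, hx⟩))
  | @tail b c _ hbc ih =>
    rcases ih with ih | ih
    · by_cases hcz : c = z
      · exact .inr ⟨b, hcz ▸ hbc.2.2, ih⟩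
      · exact .inl (ih.trans (of_adj ih.right_mem (mem_erase.2 ⟨hcz, hbc.2.1⟩) hbc.2.2))
    · exact .inr ih

theorem exists_adj_adj_not_adj (h : H.ReachIn s x y) (hxy : x ≠ y) (hn : ¬ H.Adj x y) :
    ∃ m ∈ s, ∃ p ∈ s, ∃ q ∈ s, H.Adj m p ∧ H.Adj m q ∧ p ≠ q ∧ ¬ H.Adj p q := by
  obtain ⟨hx, h⟩ := h
  suffices ∀ c, Relation.ReflTransGen (fun a b => a ∈ s ∧ b ∈ s ∧ H.Adj a b) x c →
      c = x ∨ H.Adj x c ∨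
        ∃ m ∈ s, ∃ p ∈ s, ∃ q ∈ s, H.Adj m p ∧ H.Adj m q ∧ p ≠ q ∧ ¬ H.Adj p q by
    rcases this y h with h | h | h
    · exact absurd h.symm hxy
    · exact absurd h hn
    · exact h
  intro c hc
  induction hc with
  | refl => exact .inl rfl
  | @tail b c _ hbc ih =>
    obtain ⟨hb, hc, hbc⟩ := hbc
    rcases ih with rfl | hxb | h
    · exact .inr (.inl hbc)
    · by_cases hcx : c = x
      · exact .inl hcx
      by_cases hxc : H.Adj x c
      · exact .inr (.inl hxc)
      exact .inr (.inr ⟨b, hb, x, hx, c, hc, hxb.symm, hbc, Ne.symm hcx, hxc⟩)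
    · exact .inr (.inr h)

end ReachIn

theorem PreconnectedOn.of_forall_reachIn (h : ∀ y ∈ s, H.ReachIn s y z) : H.PreconnectedOn s :=
  fun _ hx _ hy => (h _ hx).trans (h _ hy).symm

theorem PreconnectedOn.insert [DecidableEq W] (hs : H.PreconnectedOn s) (ha : a ∈ s)
    (hza : H.Adj z a) :
    H.PreconnectedOn (insert z s) := by
  refine .of_forall_reachIn (z := z) fun y hy => ?_
  rcases mem_insert.1 hy with rfl | hy
  · exact .refl (mem_insert_self _ _)
  · exact ((hs y hy a ha).mono (subset_insert _ _)).trans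
      (.of_adj (mem_insert_of_mem ha) (mem_insert_self _ _) hza.symm)

theorem mem_componentIn : y ∈ H.componentIn s a ↔ H.ReachIn s a y := by
  classical
  simp only [componentIn, mem_filter, and_iff_right_iff_imp]
  exact ReachIn.right_mem

theorem componentIn_subset : H.componentIn s a ⊆ s := by
  classical
  exact filter_subset _ _

theorem self_mem_componentIn (ha : a ∈ s) : a ∈ H.componentIn s a :=
  mem_componentIn.2 (.refl ha)

theorem componentIn_closed : ∀ b ∈ H.componentIn s a, ∀ c ∈ s, H.Adj b c → c ∈ H.componentIn s a :=
  fun _ hb _ hc hbc => mem_componentIn.2 ((mem_componentIn.1 hb).trans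
    (.of_adj (componentIn_subset hb) hc hbc))

theorem componentIn_subset_of_closed (hE : ∀ b ∈ E, ∀ c ∈ s, H.Adj b c → c ∈ E) (ha : a ∈ E) :
    H.componentIn s a ⊆ E :=
  fun _ hy => (mem_componentIn.1 hy).mem_of_closed hE ha

theorem ReachIn.reachIn_componentIn (h : H.ReachIn s a y) : H.ReachIn (H.componentIn s a) a y := by
  obtain ⟨ha, h⟩ := h
  induction h with
  | refl => exact .refl (self_mem_componentIn ha)
  | @tail b c hab hbc ih =>
    exact ih.trans (.of_adj ih.right_mem (mem_componentIn.2 ⟨ha, hab.tail hbc⟩) hbc.2.2)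

theorem preconnectedOn_componentIn : H.PreconnectedOn (H.componentIn s a) :=
  .of_forall_reachIn (z := a) fun _ hy => (mem_componentIn.1 hy).reachIn_componentIn.symm

section Degree

variable [DecidableRel H.Adj]

theorem degreeIn_mono (hst : s ⊆ t) : H.degreeIn s x ≤ H.degreeIn t x :=
  card_le_card (filter_subset_filter _ hst)

theorem degreeIn_pos (hy : y ∈ s) (hxy : H.Adj x y) : 0 < H.degreeIn s x :=
  card_pos.2 ⟨y, mem_filter.2 ⟨hy, hxy⟩⟩

theorem degreeIn_erase_add_one [DecidableEq W] (hz : z ∈ s) (hxz : H.Adj x z) :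
    H.degreeIn (s.erase z) x + 1 = H.degreeIn s x := by
  rw [degreeIn, filter_erase, card_erase_add_one (mem_filter.2 ⟨hz, hxz⟩), degreeIn]

theorem degreeIn_erase_of_not_adj [DecidableEq W] (hxz : ¬ H.Adj x z) :
    H.degreeIn (s.erase z) x = H.degreeIn s x := by
  rw [degreeIn, filter_erase, erase_eq_of_notMem (fun h => hxz (mem_filter.1 h).2), degreeIn]

theorem degreeIn_sdiff_add [DecidableEq W] (hts : t ⊆ s) :
    H.degreeIn (s \ t) x + H.degreeIn t x = H.degreeIn s x := by
  conv_rhs => rw [← sdiff_union_of_subset hts]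
  rw [degreeIn, degreeIn, degreeIn, filter_union,
    card_union_of_disjoint (disjoint_filter_filter sdiff_disjoint)]

theorem degreeIn_insert_self [DecidableEq W] : H.degreeIn (insert x s) x = H.degreeIn s x := by
  rw [degreeIn, filter_insert, if_neg (H.loopless.irrefl x), degreeIn]

theorem degreeIn_eq_of_subset (hts : t ⊆ s) (h : ∀ y ∈ s, H.Adj x y → y ∈ t) :
    H.degreeIn t x = H.degreeIn s x :=
  congrArg card (subset_antisymm (filter_subset_filter _ hts)
    fun y hy => mem_filter.2 ⟨h y (mem_filter.1 hy).1 (mem_filter.1 hy).2, (mem_filter.1 hy).2⟩)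

theorem degreeIn_univ [Fintype W] : H.degreeIn univ x = H.degree x := by
  rw [degreeIn, ← card_neighborFinset_eq_degree, neighborFinset_eq_filter]

end Degree

end Reachability

section CutComponents

variable {W : Type*} [DecidableEq W] {H : SimpleGraph W} {s t D P : Finset W} {a b p u x y z : W}

structure IsCutComponent (H : SimpleGraph W) (t : Finset W) (z : W) (D : Finset W) : Prop where
  mem : z ∈ t
  subset : D ⊆ t.erase z
  closed : ∀ a ∈ D, ∀ b ∈ t.erase z, H.Adj a b → b ∈ D
  preconnectedOn : H.PreconnectedOn D
  nonempty : D.Nonempty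
  exists_notMem : ∃ b ∈ t.erase z, b ∉ D

theorem isCutComponent_componentIn (hz : z ∈ t) (ha : a ∈ t.erase z) (hb : b ∈ t.erase z)
    (hab : ¬ H.ReachIn (t.erase z) a b) : H.IsCutComponent t z (H.componentIn (t.erase z) a) :=
  ⟨hz, componentIn_subset, componentIn_closed, preconnectedOn_componentIn,
    ⟨a, self_mem_componentIn ha⟩, b, hb, fun h => hab (mem_componentIn.1 h)⟩

theorem exists_isCutComponent (hz : z ∈ t) (h : ¬ H.PreconnectedOn (t.erase z)) :
    ∃ D, H.IsCutComponent t z D := by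
  simp only [PreconnectedOn, not_forall] at h
  obtain ⟨a, ha, b, hb, hab⟩ := h
  exact ⟨_, isCutComponent_componentIn hz ha hb hab⟩

theorem reachIn_sdiff_of_closed (ht : ∀ y ∈ t, H.ReachIn t y z) (hD : D ⊆ t.erase z)
    (hDc : ∀ a ∈ D, ∀ b ∈ t.erase z, H.Adj a b → b ∈ D) :
    ∀ y ∈ t \ D, H.ReachIn (t \ D) y z := by
  intro y hy
  obtain ⟨hz, h⟩ := (ht y (mem_sdiff.1 hy).1).symm
  have hzD : z ∉ D := fun hzD => (mem_erase.1 (hD hzD)).1 rfl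
  suffices ∀ c, Relation.ReflTransGen (fun a b => a ∈ t ∧ b ∈ t ∧ H.Adj a b) z c → c ∉ D →
      H.ReachIn (t \ D) z c from (this y h (mem_sdiff.1 hy).2).symm
  intro c hc
  induction hc with
  | refl => exact fun _ => .refl (mem_sdiff.2 ⟨hz, hzD⟩)
  | @tail b c _ hbc ih =>
    intro hcD
    obtain ⟨hb, hc, hbc⟩ := hbc
    by_cases hbD : b ∈ D
    · have hcz : c = z := by
        by_contra hcz
        exact hcD (hDc b hbD c (mem_erase.2 ⟨hcz, hc⟩) hbc)
      subst hcz
      exact .refl (mem_sdiff.2 ⟨hz, hzD⟩)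
    · exact (ih hbD).trans (.of_adj (mem_sdiff.2 ⟨hb, hbD⟩) (mem_sdiff.2 ⟨hc, hcD⟩) hbc)

theorem reachIn_erase_of_noCutVertexOn (ht : ∀ y ∈ t, H.ReachIn t y z) (hD : D ⊆ t.erase z)
    (hDc : ∀ a ∈ D, ∀ b ∈ t.erase z, H.Adj a b → b ∈ D) (hB : H.NoCutVertexOn (insert z D))
    (hu : u ∈ D) : ∀ y ∈ t.erase u, H.ReachIn (t.erase u) y z := by
  intro y hy
  have hz : z ∈ t := (ht y (mem_of_mem_erase hy)).right_mem
  have hzu : z ≠ u := fun h => (mem_erase.1 (hD (h ▸ hu))).1 rfl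
  by_cases hyD : y ∈ D
  · have hBt : (insert z D).erase u ⊆ t.erase u :=
      erase_subset_erase _ (insert_subset hz fun a ha => mem_of_mem_erase (hD ha))
    exact (hB u (mem_insert_of_mem hu) y (mem_erase.2 ⟨ne_of_mem_erase hy, mem_insert_of_mem hyD⟩)
      z (mem_erase.2 ⟨hzu, mem_insert_self _ _⟩)).mono hBt
  · exact (reachIn_sdiff_of_closed ht hD hDc y (mem_sdiff.2 ⟨mem_of_mem_erase hy, hyD⟩)).mono
      fun a ha => mem_erase.2 ⟨fun h => (mem_sdiff.1 ha).2 (h ▸ hu), (mem_sdiff.1 ha).1⟩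

namespace IsCutComponent

theorem notMem (h : H.IsCutComponent t z D) : z ∉ D :=
  fun hz => (mem_erase.1 (h.subset hz)).1 rfl

theorem not_preconnectedOn_erase (h : H.IsCutComponent t z D) :
    ¬ H.PreconnectedOn (t.erase z) := by
  intro hc
  obtain ⟨d, hd⟩ := h.nonempty
  obtain ⟨b, hb, hbD⟩ := h.exists_notMem
  exact hbD ((hc d (h.subset hd) b hb).mem_of_closed h.closed hd)

theorem exists_adj (h : H.IsCutComponent t z D) (ht : H.PreconnectedOn t) :
    ∃ d ∈ D, H.Adj z d := by
  obtain ⟨d, hd⟩ := h.nonempty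
  have hdt := h.subset hd
  rcases (ht d (mem_of_mem_erase hdt) z h.mem).erase_or_exists_adj (ne_of_mem_erase hdt) with
    hr | ⟨w, hwz, hr⟩
  · exact absurd hr.right_mem (notMem_erase z t)
  · exact ⟨w, hr.mem_of_closed h.closed hd, hwz.symm⟩

theorem exists_adj_of_erase (h : H.IsCutComponent (s.erase p) z D) (hs : H.NoCutVertexOn s)
    (hp : p ∈ s) : ∃ u ∈ D, H.Adj p u := by
  by_contra! hno
  obtain ⟨d, hd⟩ := h.nonempty
  have hzp : z ≠ p := ne_of_mem_erase h.mem
  have hclosed : ∀ a ∈ D, ∀ b ∈ s.erase z, H.Adj a b → b ∈ D := by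
    intro a ha b hb hab
    have hbp : b ≠ p := by rintro rfl; exact hno a ha hab.symm
    exact h.closed a ha b (mem_erase.2 ⟨ne_of_mem_erase hb, mem_erase.2 ⟨hbp, mem_of_mem_erase hb⟩⟩)
      hab
  have hdz : d ∈ s.erase z := erase_subset_erase _ (erase_subset _ _) (h.subset hd)
  have hpD := (hs z (mem_of_mem_erase h.mem) d hdz p (mem_erase.2 ⟨hzp.symm, hp⟩)).mem_of_closed
    hclosed hd
  exact ne_of_mem_erase (mem_of_mem_erase (h.subset hpD)) rfl

theorem exists_ssubset_of_not_noCutVertexOn (h : H.IsCutComponent t z D)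
    (hB : ¬ H.NoCutVertexOn (insert z D)) : ∃ y E, H.IsCutComponent t y E ∧ E ⊂ D := by
  simp only [NoCutVertexOn, not_forall] at hB
  obtain ⟨y, hy, hyB⟩ := hB
  have hyz : y ≠ z := by
    rintro rfl
    rw [erase_insert h.notMem] at hyB
    exact hyB h.preconnectedOn
  have hyD : y ∈ D := (mem_insert.1 hy).resolve_left hyz
  set B := (insert z D).erase y
  obtain ⟨e, he, hez⟩ : ∃ e ∈ B, ¬ H.ReachIn B e z := by
    by_contra! hcon
    exact hyB (.of_forall_reachIn hcon)
  have hzE : z ∉ H.componentIn B e := fun hz => hez (mem_componentIn.1 hz)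
  have hED : H.componentIn B e ⊆ D.erase y := by
    intro a ha
    obtain ⟨hay, haD⟩ := mem_erase.1 (componentIn_subset ha)
    exact mem_erase.2 ⟨hay, (mem_insert.1 haD).resolve_left fun h => hzE (h ▸ ha)⟩
  have hEc : ∀ a ∈ H.componentIn B e, ∀ b ∈ t.erase y, H.Adj a b → b ∈ H.componentIn B e := by
    intro a ha b hb hab
    refine componentIn_closed a ha b (mem_erase.2 ⟨ne_of_mem_erase hb, ?_⟩) hab
    by_cases hbz : b = z
    · exact hbz ▸ mem_insert_self _ _
    · exact mem_insert_of_mem (h.closed a (mem_of_mem_erase (hED ha)) b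
        (mem_erase.2 ⟨hbz, mem_of_mem_erase hb⟩) hab)
  have hE := componentIn_subset_of_closed hEc (self_mem_componentIn he)
  refine ⟨y, _, isCutComponent_componentIn (mem_of_mem_erase (h.subset hyD))
    (erase_subset_erase _ (insert_subset h.mem fun a ha => mem_of_mem_erase (h.subset ha)) he)
    (mem_erase.2 ⟨hyz.symm, h.mem⟩) fun hr => hzE (hE (mem_componentIn.2 hr)),
    (hE.trans hED).trans_ssubset (erase_ssubset hyD)⟩

theorem exists_endBlock (h : H.IsCutComponent t z D) (hP : Disjoint D P) :
    ∃ z' D', H.IsCutComponent t z' D' ∧ H.NoCutVertexOn (insert z' D') ∧ Disjoint D' P := by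
  induction D using Finset.strongInduction generalizing z with
  | H D ih =>
  by_cases hB : H.NoCutVertexOn (insert z D)
  · exact ⟨z, D, h, hB, hP⟩
  obtain ⟨y, E, hE, hED⟩ := h.exists_ssubset_of_not_noCutVertexOn hB
  exact ih E hED hE (hP.mono_left hED.subset)

theorem degreeIn_insert [DecidableRel H.Adj] (h : H.IsCutComponent t z D) (hy : y ∈ D) :
    H.degreeIn (insert z D) y = H.degreeIn t y := by
  refine degreeIn_eq_of_subset (insert_subset h.mem fun a ha => mem_of_mem_erase (h.subset ha))
    fun w hw hyw => ?_
  by_cases hwz : w = z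
  · exact hwz ▸ mem_insert_self _ _
  · exact mem_insert_of_mem (h.closed y hy w (mem_erase.2 ⟨hwz, hw⟩) hyw)

end IsCutComponent

end CutComponents

section EndBlocks

variable {W : Type*} [DecidableEq W] {H : SimpleGraph W} {s t C D : Finset W}
  {p q u₁ u₂ w x x₁ x₂ : W}

theorem exists_disjoint_endBlocks (ht : H.PreconnectedOn t) (hq : q ∈ t)
    (hcut : ¬ H.PreconnectedOn (t.erase q)) :
    ∃ x₁ C x₂ D, H.IsCutComponent t x₁ C ∧ H.NoCutVertexOn (insert x₁ C) ∧
      H.IsCutComponent t x₂ D ∧ H.NoCutVertexOn (insert x₂ D) ∧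
      Disjoint D (insert x₁ C) ∧ x₂ ∉ C := by
  obtain ⟨D₀, hD₀⟩ := exists_isCutComponent hq hcut
  obtain ⟨x₁, C, hC, hCB, -⟩ := hD₀.exists_endBlock (disjoint_empty_right D₀)
  obtain ⟨b, hb, hbC⟩ := hC.exists_notMem
  obtain ⟨c, hc⟩ := hC.nonempty
  have hE := isCutComponent_componentIn hC.mem hb (hC.subset hc)
    fun h => hbC (h.symm.mem_of_closed hC.closed hc)
  have hdisj : Disjoint (H.componentIn (t.erase x₁) b) (insert x₁ C) := by
    refine disjoint_insert_right.2 ⟨hE.notMem, ?_⟩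
    rw [Finset.disjoint_left]
    exact fun y hy hyC => hbC ((mem_componentIn.1 hy).symm.mem_of_closed hC.closed hyC)
  obtain ⟨x₂, D, hD, hDB, hDdisj⟩ := hE.exists_endBlock hdisj
  refine ⟨x₁, C, x₂, D, hC, hCB, hD, hDB, hDdisj, fun hx₂ => hD.not_preconnectedOn_erase ?_⟩
  exact .of_forall_reachIn (reachIn_erase_of_noCutVertexOn (fun y hy => ht y hy x₁ hC.mem)
    hC.subset hC.closed hCB hx₂)

theorem reachIn_erase_erase_of_endBlocks (hp : p ∈ s) (ht : H.PreconnectedOn (s.erase p))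
    (hC : H.IsCutComponent (s.erase p) x₁ C) (hCB : H.NoCutVertexOn (insert x₁ C))
    (hD : H.IsCutComponent (s.erase p) x₂ D) (hDB : H.NoCutVertexOn (insert x₂ D))
    (hx₂C : x₂ ∉ C) (hu₁ : u₁ ∈ C) (hu₁D : u₁ ∉ D) (hu₂ : u₂ ∈ D)
    (hw : w ∈ ((s.erase p).erase u₁).erase u₂) (hpw : H.Adj p w) :
    ∀ y ∈ (s.erase u₁).erase u₂, H.ReachIn ((s.erase u₁).erase u₂) y p := by
  set t := s.erase p
  have h₁ := reachIn_erase_of_noCutVertexOn (fun y hy => ht y hy x₁ hC.mem) hC.subset hC.closed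
    hCB hu₁
  have hx₂ : x₂ ∈ t.erase u₁ := mem_erase.2 ⟨fun h => hx₂C (h ▸ hu₁), hD.mem⟩
  have hDt : D ⊆ (t.erase u₁).erase x₂ := fun a ha => by
    have := hD.subset ha
    simp only [mem_erase] at this ⊢
    exact ⟨this.1, fun h => hu₁D (h ▸ ha), this.2⟩
  have h₂ := reachIn_erase_of_noCutVertexOn (fun y hy => (h₁ y hy).trans (h₁ x₂ hx₂).symm) hDt
    (fun a ha b hb => hD.closed a ha b (by simp only [mem_erase] at hb ⊢; tauto)) hDB hu₂
  have hsub : (t.erase u₁).erase u₂ ⊆ (s.erase u₁).erase u₂ :=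
    erase_subset_erase _ (erase_subset_erase _ (erase_subset _ _))
  have hpu₁ : p ≠ u₁ := fun h => ne_of_mem_erase (mem_of_mem_erase (hC.subset (h ▸ hu₁))) rfl
  have hpu₂ : p ≠ u₂ := fun h => ne_of_mem_erase (mem_of_mem_erase (hD.subset (h ▸ hu₂))) rfl
  have hp' : p ∈ (s.erase u₁).erase u₂ := mem_erase.2 ⟨hpu₂, mem_erase.2 ⟨hpu₁, hp⟩⟩
  have hx₂p := ((h₂ w hw).symm.mono hsub).trans (.of_adj (hsub hw) hp' hpw.symm)
  intro y hy
  by_cases hyp : y = p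
  · subst hyp
    exact .refl hp'
  · refine ((h₂ y ?_).mono hsub).trans hx₂p
    simp only [t, mem_erase] at hy ⊢
    tauto

variable [DecidableRel H.Adj]

theorem exists_adj_ne_ne (h : 3 ≤ H.degreeIn s p) (a b : W) :
    ∃ w ∈ s, H.Adj p w ∧ w ≠ a ∧ w ≠ b := by
  rw [degreeIn] at h
  have := card_le_card_sdiff_add_card (s := s.filter (H.Adj p)) (t := {a, b})
  have := card_le_two (a := a) (b := b)
  obtain ⟨w, hw⟩ := card_pos.1 (by omega : 0 < (s.filter (H.Adj p) \ {a, b}).card)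
  simp only [mem_sdiff, mem_filter, mem_insert, mem_singleton, not_or] at hw
  exact ⟨w, hw.1.1, hw.1.2, hw.2⟩

theorem exists_adj_reachIn_erase_of_degreeIn_lt (ht : H.PreconnectedOn (s.erase p))
    (hC : H.IsCutComponent (s.erase p) x₁ C) (hCB : H.NoCutVertexOn (insert x₁ C))
    (hu₁ : u₁ ∈ C) (hpu₁ : H.Adj p u₁) (hu₂ : u₂ ∈ s) (hu₂C : u₂ ∉ C) (hpu₂ : H.Adj p u₂)
    (hp3 : H.degreeIn s p < 3) (hu₁3 : 3 ≤ H.degreeIn s u₁) :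
    ∃ y ∈ C, H.Adj u₁ y ∧ ¬ H.Adj p y ∧
      ∀ z ∈ (s.erase p).erase y, H.ReachIn ((s.erase p).erase y) z u₁ := by
  have hu₁s : u₁ ∈ s := mem_of_mem_erase (mem_of_mem_erase (hC.subset hu₁))
  have hN : s.filter (H.Adj p) = {u₁, u₂} := by
    refine (eq_of_subset_of_card_le ?_ ?_).symm
    · exact insert_subset (mem_filter.2 ⟨hu₁s, hpu₁⟩)
        (singleton_subset_iff.2 (mem_filter.2 ⟨hu₂, hpu₂⟩))
    · rw [card_pair (by rintro rfl; exact hu₂C hu₁)]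
      exact Nat.lt_succ_iff.1 hp3
  obtain ⟨y, hy, hu₁y, hyx₁, hyp⟩ := exists_adj_ne_ne hu₁3 x₁ p
  have hyC : y ∈ C := hC.closed u₁ hu₁ y (mem_erase.2 ⟨hyx₁, mem_erase.2 ⟨hyp, hy⟩⟩) hu₁y
  refine ⟨y, hyC, hu₁y, fun hpy => ?_, ?_⟩
  · have : y ∈ s.filter (H.Adj p) := mem_filter.2 ⟨hy, hpy⟩
    rw [hN, mem_insert, mem_singleton] at this
    rcases this with rfl | rfl
    · exact hu₁y.ne rfl
    · exact hu₂C hyC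
  · have h := reachIn_erase_of_noCutVertexOn (fun y hy => ht y hy x₁ hC.mem) hC.subset hC.closed
      hCB hyC
    have hu₁' : u₁ ∈ (s.erase p).erase y := mem_erase.2 ⟨hu₁y.ne, mem_of_mem_erase (hC.subset hu₁)⟩
    exact fun z hz => (h z hz).trans (h u₁ hu₁').symm

theorem exists_adj_adj_reachIn_erase_erase (hs : H.PreconnectedOn s) (hcut : H.NoCutVertexOn s)
    (hdeg : ∀ y ∈ s, y ≠ x → 3 ≤ H.degreeIn s y) (hnc : ¬ H.IsClique (s : Set W)) :
    ∃ v ∈ s, ∃ p ∈ s, ∃ q ∈ s, H.Adj v p ∧ H.Adj v q ∧ p ≠ q ∧ ¬ H.Adj p q ∧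
      ∀ y ∈ (s.erase p).erase q, H.ReachIn ((s.erase p).erase q) y v := by
  obtain ⟨p₀, hp₀, q₀, hq₀, hne, hn⟩ : ∃ p ∈ s, ∃ q ∈ s, p ≠ q ∧ ¬ H.Adj p q := by
    simpa [IsClique, Set.Pairwise] using hnc
  obtain ⟨m, hm, p, hp, q, hq, hmp, hmq, hpq, hnpq⟩ :=
    (hs p₀ hp₀ q₀ hq₀).exists_adj_adj_not_adj hne hn
  by_cases hm' : ∀ y ∈ (s.erase p).erase q, H.ReachIn ((s.erase p).erase q) y m
  · exact ⟨m, hm, p, hp, q, hq, hmp, hmq, hpq, hnpq, hm'⟩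
  have ht := hcut p hp
  have hmt : m ∈ (s.erase p).erase q := mem_erase.2 ⟨hmq.ne, mem_erase.2 ⟨hmp.ne, hm⟩⟩
  obtain ⟨x₁, C, x₂, D, hC, hCB, hD, hDB, hdisj, hx₂C⟩ := exists_disjoint_endBlocks ht
    (mem_erase.2 ⟨hpq.symm, hq⟩) fun hc => hm' fun y hy => hc y hy m hmt
  obtain ⟨u₁, hu₁, hpu₁⟩ := hC.exists_adj_of_erase hcut hp
  obtain ⟨u₂, hu₂, hpu₂⟩ := hD.exists_adj_of_erase hcut hp
  have hu₂C : u₂ ∉ insert x₁ C := Finset.disjoint_left.1 hdisj hu₂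
  have hu₁s : u₁ ∈ s := mem_of_mem_erase (mem_of_mem_erase (hC.subset hu₁))
  have hu₂s : u₂ ∈ s := mem_of_mem_erase (mem_of_mem_erase (hD.subset hu₂))
  -- `p` has a neighbour `uᵢ` in each end block; if `p` has a third neighbour then `v := p`
  -- works, otherwise `p = x` and `v := u₁` works
  by_cases hp3 : 3 ≤ H.degreeIn s p
  · obtain ⟨w, hw, hpw, hwu₁, hwu₂⟩ := exists_adj_ne_ne hp3 u₁ u₂
    refine ⟨p, hp, u₁, hu₁s, u₂, hu₂s, hpu₁, hpu₂,
      by rintro rfl; exact hu₂C (mem_insert_of_mem hu₁),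
      fun h => hu₂C (mem_insert_of_mem (hC.closed u₁ hu₁ u₂ ?_ h)), ?_⟩
    · exact mem_erase.2 ⟨fun h => hu₂C (h ▸ mem_insert_self _ _), mem_of_mem_erase (hD.subset hu₂)⟩
    · refine reachIn_erase_erase_of_endBlocks hp ht hC hCB hD hDB hx₂C hu₁
        (fun h => Finset.disjoint_left.1 hdisj h (mem_insert_of_mem hu₁)) hu₂ ?_ hpw
      exact mem_erase.2 ⟨hwu₂, mem_erase.2 ⟨hwu₁, mem_erase.2 ⟨hpw.ne.symm, hw⟩⟩⟩
  · have hpx : p = x := by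
      by_contra h
      exact hp3 (hdeg p hp h)
    obtain ⟨y, hyC, hu₁y, hpy, hy⟩ := exists_adj_reachIn_erase_of_degreeIn_lt ht hC hCB hu₁
      hpu₁ hu₂s (fun h => hu₂C (mem_insert_of_mem h)) hpu₂ (not_le.1 hp3)
      (hdeg u₁ hu₁s (hpx ▸ hpu₁.ne.symm))
    have hyt := mem_of_mem_erase (hC.subset hyC)
    exact ⟨u₁, hu₁s, p, hp, y, mem_of_mem_erase hyt, hpu₁.symm, hu₁y, (ne_of_mem_erase hyt).symm,
      hpy, hy⟩

end EndBlocks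

section GroupColoring

variable {W : Type*} (H : SimpleGraph W) {A : Type*} [AddCommGroup A] (f : W → W → A)

def IsGroupColoringOn (L : W → Finset A) (s : Finset W) (c : W → A) : Prop :=
  (∀ v ∈ s, c v ∈ L v) ∧ ∀ v ∈ s, ∀ w ∈ s, H.Adj v w → c v - c w ≠ f v w

def GroupColorableOn (L : W → Finset A) (s : Finset W) : Prop :=
  ∃ c, H.IsGroupColoringOn f L s c

def residualLists [DecidableRel H.Adj] [DecidableEq A] (L : W → Finset A) (u : W) (a : A) :
    W → Finset A :=
  fun y => if H.Adj y u then (L y).erase (a + f y u) else L y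

open Classical in
noncomputable def extendableColors (L : W → Finset A) (s : Finset W) (x : W) : Finset A :=
  (L x).filter fun a => ∃ c, H.IsGroupColoringOn f L s c ∧ c x = a

variable {H f} {L L' : W → Finset A} {s t D : Finset W} {c c₁ c₂ : W → A} {a : A} {u v x : W}

theorem mem_extendableColors :
    a ∈ H.extendableColors f L s x ↔ a ∈ L x ∧ ∃ c, H.IsGroupColoringOn f L s c ∧ c x = a := by
  classical
  simp [extendableColors]

theorem IsGroupColoringOn.mono (h : H.IsGroupColoringOn f L s c) (hts : t ⊆ s)
    (hL : ∀ v ∈ t, L v ⊆ L' v) : H.IsGroupColoringOn f L' t c :=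
  ⟨fun v hv => hL v hv (h.1 v (hts hv)), fun v hv w hw => h.2 v (hts hv) w (hts hw)⟩

theorem groupColorableOn_empty : H.GroupColorableOn f L ∅ :=
  ⟨0, by simp [IsGroupColoringOn]⟩

variable [DecidableEq W]

theorem IsGroupColoringOn.piecewise (hf : ∀ x y, f x y = -f y x)
    (h₁ : H.IsGroupColoringOn f L (s \ D) c₁) (h₂ : H.IsGroupColoringOn f L D c₂)
    (hcross : ∀ v ∈ D, ∀ w ∈ s \ D, H.Adj v w → c₂ v - c₁ w ≠ f v w) :
    H.IsGroupColoringOn f L s (D.piecewise c₂ c₁) := by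
  refine ⟨fun v hv => ?_, fun v hv w hw hvw => ?_⟩
  · by_cases hvD : v ∈ D
    · rw [piecewise_eq_of_mem _ _ _ hvD]
      exact h₂.1 v hvD
    · rw [piecewise_eq_of_notMem _ _ _ hvD]
      exact h₁.1 v (mem_sdiff.2 ⟨hv, hvD⟩)
  · by_cases hvD : v ∈ D <;> by_cases hwD : w ∈ D <;>
      simp only [piecewise_eq_of_mem, piecewise_eq_of_notMem, hvD, hwD, not_false_eq_true]
    · exact h₂.2 v hvD w hwD hvw
    · exact hcross v hvD w (mem_sdiff.2 ⟨hw, hwD⟩) hvw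
    · intro h
      refine hcross w hwD v (mem_sdiff.2 ⟨hv, hvD⟩) hvw.symm ?_
      rw [hf, ← h]
      abel
    · exact h₁.2 v (mem_sdiff.2 ⟨hv, hvD⟩) w (mem_sdiff.2 ⟨hw, hwD⟩) hvw

theorem IsGroupColoringOn.update (hf : ∀ x y, f x y = -f y x)
    (h : H.IsGroupColoringOn f L (s.erase u) c) (ha : a ∈ L u)
    (hfree : ∀ w ∈ s, H.Adj u w → a - c w ≠ f u w) :
    H.IsGroupColoringOn f L s (Function.update c u a) := by
  refine ⟨fun w hw => ?_, fun w hw y hy hwy => ?_⟩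
  · by_cases hwu : w = u
    · subst hwu
      rwa [Function.update_self]
    · rw [Function.update_of_ne hwu]
      exact h.1 w (mem_erase.2 ⟨hwu, hw⟩)
  · by_cases hwu : w = u <;> by_cases hyu : y = u
    · exact absurd (hwu.trans hyu.symm) hwy.ne
    · subst hwu
      rw [Function.update_self, Function.update_of_ne hyu]
      exact hfree y hy hwy
    · subst hyu
      rw [Function.update_self, Function.update_of_ne hwu]
      intro h
      refine hfree w hw hwy.symm ?_
      rw [hf, ← h]
      abel
    · rw [Function.update_of_ne hwu, Function.update_of_ne hyu]
      exact h.2 w (mem_erase.2 ⟨hwu, hw⟩) y (mem_erase.2 ⟨hyu, hy⟩) hwy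

theorem GroupColorableOn.of_extendableColors (hf : ∀ x y, f x y = -f y x)
    (hD : H.IsCutComponent s z D)
    (h : H.GroupColorableOn f (Function.update L z (H.extendableColors f L (s \ D) z))
      (insert z D)) : H.GroupColorableOn f L s := by
  obtain ⟨c₂, hc₂⟩ := h
  have hc₂z := hc₂.1 z (mem_insert_self _ _)
  rw [Function.update_self] at hc₂z
  obtain ⟨-, c₁, hc₁, hc₁z⟩ := mem_extendableColors.1 hc₂z
  refine ⟨_, hc₁.piecewise hf (hc₂.mono (subset_insert _ _) fun y hy => ?_) fun v hv w hw hvw => ?_⟩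
  · rw [Function.update_of_ne (ne_of_mem_of_not_mem hy hD.notMem)]
  · have hwz : w = z := by
      by_contra hwz
      exact (mem_sdiff.1 hw).2 (hD.closed v hv w (mem_erase.2 ⟨hwz, (mem_sdiff.1 hw).1⟩) hvw)
    subst hwz
    rw [hc₁z]
    exact hc₂.2 v (mem_insert_of_mem hv) w (mem_insert_self _ _) hvw

variable [DecidableRel H.Adj] [DecidableEq A]

theorem GroupColorableOn.of_erase (hf : ∀ x y, f x y = -f y x)
    (hdeg : H.degreeIn s v < (L v).card) (h : H.GroupColorableOn f L (s.erase v)) :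
    H.GroupColorableOn f L s := by
  obtain ⟨c, hc⟩ := h
  obtain ⟨a, ha, haT⟩ := exists_mem_notMem_of_card_lt_card
    ((card_image_le (s := s.filter (H.Adj v)) (f := fun w => c w + f v w)).trans_lt hdeg)
  refine ⟨_, hc.update hf ha fun w hw hvw h => haT (mem_image.2 ⟨w, mem_filter.2 ⟨hw, hvw⟩, ?_⟩)⟩
  rw [← h]
  abel

theorem GroupColorableOn.of_residualLists (hf : ∀ x y, f x y = -f y x)
    (ha : a ∈ L u) (h : H.GroupColorableOn f (H.residualLists f L u a) (s.erase u)) :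
    H.GroupColorableOn f L s := by
  obtain ⟨c, hc⟩ := h
  have hsub : ∀ w, H.residualLists f L u a w ⊆ L w := fun w => by
    unfold residualLists
    split_ifs
    exacts [erase_subset _ _, subset_rfl]
  refine ⟨_, (hc.mono subset_rfl fun w _ => hsub w).update hf ha fun w hw huw h => ?_⟩
  have hwu : w ≠ u := huw.ne.symm
  have hcw := hc.1 w (mem_erase.2 ⟨hwu, hw⟩)
  rw [residualLists, if_pos huw.symm] at hcw
  refine (mem_erase.1 hcw).1 ?_
  rw [hf, ← h]
  abel

theorem degreeIn_erase_add_card_le (hu : u ∈ s) (y : W) :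
    H.degreeIn (s.erase u) y + (L y).card ≤ H.degreeIn s y + (H.residualLists f L u a y).card := by
  unfold residualLists
  split_ifs with hyu
  · have := degreeIn_erase_add_one hu hyu
    have := pred_card_le_card_erase (s := L y) (a := a + f y u)
    omega
  · rw [degreeIn_erase_of_not_adj hyu]

theorem groupColorableOn_of_forall_reachIn_lt (hf : ∀ x y, f x y = -f y x)
    (hdeg : ∀ y ∈ s, H.degreeIn s y ≤ (L y).card)
    (hslack : ∀ y ∈ s, ∃ v, H.ReachIn s y v ∧ H.degreeIn s v < (L v).card) :
    H.GroupColorableOn f L s := by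
  induction s using Finset.strongInduction with
  | H s ih =>
  rcases s.eq_empty_or_nonempty with rfl | ⟨y, hy⟩
  · exact groupColorableOn_empty
  obtain ⟨v, hyv, hv⟩ := hslack y hy
  have hvs := hyv.right_mem
  refine .of_erase hf hv (ih _ (erase_ssubset hvs)
    (fun w hw => (degreeIn_mono (erase_subset _ _)).trans (hdeg w (mem_of_mem_erase hw)))
    fun w hw => ?_)
  obtain ⟨v', hwv', hv'⟩ := hslack w (mem_of_mem_erase hw)
  -- the walk to `v'` avoids `v` or first meets a neighbour of `v`, which gains a spare colour
  rcases hwv'.erase_or_exists_adj (ne_of_mem_erase hw) with h | ⟨x, hxv, h⟩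
  · exact ⟨v', h, (degreeIn_mono (erase_subset _ _)).trans_lt hv'⟩
  · have := degreeIn_erase_add_one hvs hxv
    have := hdeg x (mem_of_mem_erase h.right_mem)
    exact ⟨x, h, by omega⟩

end GroupColoring

section Exchange

variable {W : Type*} [DecidableEq W] {H : SimpleGraph W} [DecidableRel H.Adj]
  {A : Type*} [AddCommGroup A] [DecidableEq A] {f : W → W → A}
  {L : W → Finset A} {s D : Finset W} {k : ℕ} {p q v x y z : W}

theorem exists_add_eq_or_notMem {X Y Z : Finset A} (α β : A) (hX : X.Nonempty)
    (hY : Y.Nonempty) (h : Z.card < X.card + Y.card) :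
    ∃ a ∈ X, ∃ b ∈ Y, a + α = b + β ∨ a + α ∉ Z ∨ b + β ∉ Z := by
  by_contra! hcon
  obtain ⟨a₀, ha₀⟩ := hX
  obtain ⟨b₀, hb₀⟩ := hY
  have hdisj : Disjoint (X.image (· + α)) (Y.image (· + β)) := by
    rw [Finset.disjoint_left]
    rintro _ hxa hxb
    obtain ⟨a, ha, rfl⟩ := mem_image.1 hxa
    obtain ⟨b, hb, hab⟩ := mem_image.1 hxb
    exact (hcon a ha b hb).1 hab.symm
  have hsub : X.image (· + α) ∪ Y.image (· + β) ⊆ Z := by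
    refine union_subset (fun _ hx => ?_) fun _ hy => ?_
    · obtain ⟨a, ha, rfl⟩ := mem_image.1 hx
      exact (hcon a ha b₀ hb₀).2.1
    · obtain ⟨b, hb, rfl⟩ := mem_image.1 hy
      exact (hcon a₀ ha₀ b hb).2.2
  have := card_le_card hsub
  rw [card_union_of_disjoint hdisj, card_image_of_injective _ (add_left_injective α),
    card_image_of_injective _ (add_left_injective β)] at this
  omega

theorem groupColorableOn_of_exchange (hf : ∀ x y, f x y = -f y x) (hv : v ∈ s) (hp : p ∈ s)
    (hq : q ∈ s) (hvp : H.Adj v p) (hvq : H.Adj v q) (hpq : p ≠ q) (hnpq : ¬ H.Adj p q)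
    (hreach : ∀ y ∈ (s.erase p).erase q, H.ReachIn ((s.erase p).erase q) y v)
    (hdeg : ∀ y ∈ s, H.degreeIn s y ≤ (L y).card)
    (hcard : (L v).card < (L p).card + (L q).card) : H.GroupColorableOn f L s := by
  obtain ⟨a, ha, b, hb, hab⟩ := exists_add_eq_or_notMem (f v p) (f v q)
    (card_pos.1 ((degreeIn_pos (H := H) hv hvp.symm).trans_le (hdeg p hp)))
    (card_pos.1 ((degreeIn_pos (H := H) hv hvq.symm).trans_le (hdeg q hq))) hcard
  -- colouring `p` with `a` and `q` with `b` costs `v` two neighbours but at most one colour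
  have hq₁ : q ∈ s.erase p := mem_erase.2 ⟨hpq.symm, hq⟩
  have hb₁ : b ∈ H.residualLists f L p a q := by
    rwa [residualLists, if_neg fun h => hnpq h.symm]
  refine .of_residualLists hf ha (.of_residualLists hf hb₁ ?_)
  refine groupColorableOn_of_forall_reachIn_lt hf (fun y hy => ?_) fun y hy => ⟨v, hreach y hy, ?_⟩
  · have := degreeIn_erase_add_card_le (H := H) (f := f) (L := H.residualLists f L p a) (a := b)
      hq₁ y
    have := degreeIn_erase_add_card_le (H := H) (f := f) (L := L) (a := a) hp y
    have := hdeg y (mem_of_mem_erase (mem_of_mem_erase hy))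
    omega
  · have := degreeIn_erase_add_one hp hvp
    have := degreeIn_erase_add_one hq₁ hvq
    have := hdeg v hv
    have : (L v).card ≤ (H.residualLists f (H.residualLists f L p a) q b v).card + 1 := by
      simp only [residualLists, if_pos hvp, if_pos hvq]
      rcases hab with h | h | h
      · rw [← h, erase_idem]
        exact Nat.le_add_of_sub_le pred_card_le_card_erase
      · rw [erase_eq_of_notMem h]
        exact Nat.le_add_of_sub_le pred_card_le_card_erase
      · rw [erase_eq_of_notMem fun h' => h (mem_of_mem_erase h')]
        exact Nat.le_add_of_sub_le pred_card_le_card_erase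
    omega

theorem card_le_degreeIn_add_card_extendableColors (hf : ∀ x y, f x y = -f y x) (hx : x ∈ s)
    (hreach : ∀ y ∈ s, H.ReachIn s y x) (hdeg : ∀ y ∈ s, y ≠ x → H.degreeIn s y ≤ (L y).card) :
    (L x).card ≤ H.degreeIn s x + (H.extendableColors f L s x).card := by
  -- otherwise, restricted to `deg x + 1` non-extendable colours, `x` has a spare colour and
  -- greedy colouring extends one of them
  by_contra! hlt
  have hsub : H.extendableColors f L s x ⊆ L x := fun a ha => (mem_extendableColors.1 ha).1
  obtain ⟨T, hT, hTcard⟩ := exists_subset_card_eq (n := H.degreeIn s x + 1)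
    (s := L x \ H.extendableColors f L s x) (by rw [card_sdiff_of_subset hsub]; omega)
  have hLT : ∀ y, Function.update L x T y ⊆ L y := fun y => by
    by_cases hyx : y = x
    · subst hyx
      exact (Function.update_self y T L).symm ▸ hT.trans sdiff_subset
    · rw [Function.update_of_ne hyx]
  obtain ⟨c, hc⟩ := groupColorableOn_of_forall_reachIn_lt hf (L := Function.update L x T)
    (fun y hy => by
      by_cases hyx : y = x
      · subst hyx
        rw [Function.update_self, hTcard]
        omega
      · rw [Function.update_of_ne hyx]
        exact hdeg y hy hyx)
    fun y hy => ⟨x, hreach y hy, by rw [Function.update_self, hTcard]; omega⟩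
  have hcx : c x ∈ L x \ H.extendableColors f L s x := hT (by simpa using hc.1 x hx)
  exact (mem_sdiff.1 hcx).2 (mem_extendableColors.2
    ⟨(mem_sdiff.1 hcx).1, c, hc.mono subset_rfl fun y _ => hLT y, rfl⟩)

theorem not_isClique_of_degreeIn_eq (hclique : H.CliqueFree (k + 1)) (hy : y ∈ s)
    (hdeg : H.degreeIn s y = k) : ¬ H.IsClique (s : Set W) := by
  intro hs
  have hN : s.filter (H.Adj y) = s.erase y := by
    ext w
    simp only [mem_filter, mem_erase]
    exact ⟨fun h => ⟨h.2.ne.symm, h.1⟩, fun h => ⟨h.2, hs hy h.2 h.1.symm⟩⟩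
  refine hclique s ((isNClique_iff H).2 ⟨hs, ?_⟩)
  rw [← card_erase_add_one hy, ← hN, ← hdeg, degreeIn]

theorem groupColorableOn_of_noCutVertexOn (hf : ∀ x y, f x y = -f y x)
    (hs : H.PreconnectedOn s) (hcut : H.NoCutVertexOn s)
    (hdeg3 : ∀ y ∈ s, y ≠ x → 3 ≤ H.degreeIn s y) (hnc : ¬ H.IsClique (s : Set W))
    (hdeg : ∀ y ∈ s, H.degreeIn s y ≤ (L y).card) (hLk : ∀ y ∈ s, (L y).card ≤ k)
    (hkL : ∀ y ∈ s, y ≠ x → k ≤ (L y).card) : H.GroupColorableOn f L s := by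
  obtain ⟨v, hv, p, hp, q, hq, hvp, hvq, hpq, hnpq, hreach⟩ :=
    exists_adj_adj_reachIn_erase_erase hs hcut hdeg3 hnc
  refine groupColorableOn_of_exchange hf hv hp hq hvp hvq hpq hnpq hreach hdeg ?_
  have := (degreeIn_pos hv hvp.symm).trans_le (hdeg p hp)
  have := (degreeIn_pos hv hvq.symm).trans_le (hdeg q hq)
  have := hLk v hv
  by_cases hpx : p = x
  · have := hkL q hq (hpx ▸ hpq.symm)
    omega
  · have := hkL p hp hpx
    omega

theorem groupColorableOn_of_endBlock (hf : ∀ x y, f x y = -f y x) (hk : 3 ≤ k)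
    (hclique : H.CliqueFree (k + 1)) (hs : H.PreconnectedOn s)
    (hdeg : ∀ y ∈ s, H.degreeIn s y = k) (hL : ∀ y ∈ s, (L y).card = k)
    (hD : H.IsCutComponent s z D) (hB : H.NoCutVertexOn (insert z D)) :
    H.GroupColorableOn f L s := by
  have hDs : D ⊆ s := fun a ha => mem_of_mem_erase (hD.subset ha)
  have hA₁ : (L z).card ≤ H.degreeIn (s \ D) z + (H.extendableColors f L (s \ D) z).card :=
    card_le_degreeIn_add_card_extendableColors hf (mem_sdiff.2 ⟨hD.mem, hD.notMem⟩)
      (reachIn_sdiff_of_closed (fun y hy => hs y hy z hD.mem) hD.subset hD.closed)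
      fun y hy _ => (degreeIn_mono sdiff_subset).trans
        ((hdeg y (mem_sdiff.1 hy).1).trans (hL y (mem_sdiff.1 hy).1).symm).le
  have hA₁k : (H.extendableColors f L (s \ D) z).card ≤ k :=
    hL z hD.mem ▸ card_le_card fun a ha => (mem_extendableColors.1 ha).1
  have hsplit := degreeIn_sdiff_add (H := H) (x := z) hDs
  have hdegD : ∀ y ∈ D, H.degreeIn (insert z D) y = k :=
    fun y hy => (hD.degreeIn_insert hy).trans (hdeg y (hDs hy))
  have hLD : ∀ y ∈ D, (Function.update L z (H.extendableColors f L (s \ D) z) y).card = k :=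
    fun y hy =>
      (congrArg card (Function.update_of_ne (ne_of_mem_of_not_mem hy hD.notMem) _ _)).trans
        (hL y (hDs hy))
  obtain ⟨d, hd, hzd⟩ := hD.exists_adj hs
  refine .of_extendableColors hf hD (groupColorableOn_of_noCutVertexOn hf
    (hD.preconnectedOn.insert hd hzd) hB (x := z) (k := k) ?_
    (not_isClique_of_degreeIn_eq hclique (mem_insert_of_mem hd) (hdegD d hd)) ?_ ?_ ?_) <;>
    intro y hy <;> rcases mem_insert.1 hy with hyz | hyD
  · exact fun h => absurd hyz h
  · exact fun _ => hdegD y hyD ▸ hk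
  · rw [hyz, Function.update_self, degreeIn_insert_self]
    have := hdeg z hD.mem
    have := hL z hD.mem
    omega
  · rw [hLD y hyD, hdegD y hyD]
  · rwa [hyz, Function.update_self]
  · exact (hLD y hyD).le
  · exact fun h => absurd hyz h
  · exact fun _ => (hLD y hyD).ge

end Exchange

section Brooks

variable {W : Type*} [DecidableEq W] {H : SimpleGraph W} [DecidableRel H.Adj]
  {A : Type*} [AddCommGroup A] [DecidableEq A] {f : W → W → A}
  {L : W → Finset A} {s : Finset W} {k : ℕ}

theorem groupColorableOn_of_preconnectedOn (hf : ∀ x y, f x y = -f y x) (hk : 3 ≤ k)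
    (hclique : H.CliqueFree (k + 1)) (hs : H.PreconnectedOn s)
    (hdeg : ∀ y ∈ s, H.degreeIn s y ≤ k) (hL : ∀ y ∈ s, (L y).card = k) :
    H.GroupColorableOn f L s := by
  by_cases hslack : ∃ v ∈ s, H.degreeIn s v < k
  · obtain ⟨v, hv, hvk⟩ := hslack
    exact groupColorableOn_of_forall_reachIn_lt hf (fun y hy => (hL y hy).symm ▸ hdeg y hy)
      fun y hy => ⟨v, hs y hy v hv, (hL v hv).symm ▸ hvk⟩
  push Not at hslack
  have htight : ∀ y ∈ s, H.degreeIn s y = k := fun y hy => (hdeg y hy).antisymm (hslack y hy)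
  by_cases hcut : H.NoCutVertexOn s
  · rcases s.eq_empty_or_nonempty with rfl | ⟨x, hx⟩
    · exact groupColorableOn_empty
    exact groupColorableOn_of_noCutVertexOn hf hs hcut (x := x) (k := k)
      (fun y hy _ => (htight y hy).symm ▸ hk) (not_isClique_of_degreeIn_eq hclique hx (htight x hx))
      (fun y hy => ((htight y hy).trans (hL y hy).symm).le) (fun y hy => (hL y hy).le)
      fun y hy _ => (hL y hy).ge
  · simp only [NoCutVertexOn, not_forall] at hcut
    obtain ⟨z, hz, hcut⟩ := hcut
    obtain ⟨D, hD⟩ := exists_isCutComponent hz hcut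
    obtain ⟨z', D', hD', hB, -⟩ := hD.exists_endBlock (disjoint_empty_right D)
    exact groupColorableOn_of_endBlock hf hk hclique hs htight hL hD' hB

theorem groupColorableOn_of_degreeIn_le (hf : ∀ x y, f x y = -f y x) (hk : 3 ≤ k)
    (hclique : H.CliqueFree (k + 1)) (hdeg : ∀ y ∈ s, H.degreeIn s y ≤ k)
    (hL : ∀ y ∈ s, (L y).card = k) : H.GroupColorableOn f L s := by
  induction s using Finset.strongInduction with
  | H s ih =>
  rcases s.eq_empty_or_nonempty with rfl | ⟨a, ha⟩
  · exact groupColorableOn_empty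
  have hC : H.componentIn s a ⊆ s := componentIn_subset
  obtain ⟨c₂, hc₂⟩ := groupColorableOn_of_preconnectedOn hf hk hclique preconnectedOn_componentIn
    (fun y hy => (degreeIn_mono hC).trans (hdeg y (hC hy))) fun y hy => hL y (hC hy)
  obtain ⟨c₁, hc₁⟩ := ih _ (sdiff_ssubset hC ⟨a, self_mem_componentIn ha⟩)
    (fun y hy => (degreeIn_mono sdiff_subset).trans (hdeg y (mem_sdiff.1 hy).1))
    fun y hy => hL y (mem_sdiff.1 hy).1
  exact ⟨_, hc₁.piecewise hf hc₂ fun v hv w hw hvw =>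
    absurd (componentIn_closed v hv w (mem_sdiff.1 hw).1 hvw) (mem_sdiff.1 hw).2⟩

end Brooks

end SimpleGraph

theorem groupChoosable_of_degree_lt {W : Type} [Fintype W] (H : SimpleGraph W)
    [DecidableRel H.Adj] {k : ℕ} (hdeg : ∀ v, H.degree v < k) : GroupChoosable H k := by
  classical
  intro A _ _ _ L hL f hf
  obtain ⟨c, hcL, hc⟩ := groupColorableOn_of_forall_reachIn_lt hf (s := univ)
    (fun y _ => degreeIn_univ.trans_le ((hdeg y).le.trans (hL y).ge))
    fun y _ => ⟨y, .refl (mem_univ y), degreeIn_univ.trans_lt ((hdeg y).trans_eq (hL y).symm)⟩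
  exact ⟨c, fun v => hcL v (mem_univ v), fun x y hxy => hc x (mem_univ x) y (mem_univ y) hxy⟩

theorem groupChoosable_of_degree_le_of_cliqueFree {W : Type} [Fintype W] (H : SimpleGraph W)
    [DecidableRel H.Adj] {k : ℕ} (hk : 3 ≤ k) (hdeg : ∀ v, H.degree v ≤ k)
    (hclique : H.CliqueFree (k + 1)) : GroupChoosable H k := by
  classical
  intro A _ _ _ L hL f hf
  obtain ⟨c, hcL, hc⟩ := groupColorableOn_of_degreeIn_le hf hk hclique (s := univ)
    (fun y _ => degreeIn_univ.trans_le (hdeg y)) fun y _ => hL y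
  exact ⟨c, fun v => hcL v (mem_univ v), fun x y hxy => hc x (mem_univ x) y (mem_univ y) hxy⟩

theorem Sym2.mem_of_exists_mem_mk_of_notMem {α : Type*} {a b : α} {e : Sym2 α}
    (h : ∃ v, v ∈ s(a, b) ∧ v ∈ e) (ha : a ∉ e) : b ∈ e := by
  obtain ⟨v, hv, hve⟩ := h
  rcases Sym2.mem_iff.1 hv with rfl | rfl
  exacts [absurd hve ha, hve]

theorem Sym2.mem_triangle_of_exists_mem {α : Type*} [DecidableEq α] {a b c : α} {e : Sym2 α}
    (hab : a ≠ b) (hbc : b ≠ c) (hac : a ≠ c) (h₁ : ∃ v, v ∈ s(a, b) ∧ v ∈ e)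
    (h₂ : ∃ v, v ∈ s(b, c) ∧ v ∈ e) (h₃ : ∃ v, v ∈ s(a, c) ∧ v ∈ e) :
    e ∈ ({s(a, b), s(b, c), s(a, c)} : Finset (Sym2 α)) := by
  simp only [mem_insert, mem_singleton]
  by_cases ha : a ∈ e
  · by_cases hb : b ∈ e
    · exact .inl ((Sym2.mem_and_mem_iff hab).1 ⟨ha, hb⟩)
    · exact .inr (.inr ((Sym2.mem_and_mem_iff hac).1
        ⟨ha, Sym2.mem_of_exists_mem_mk_of_notMem h₂ hb⟩))
  · exact .inr (.inl ((Sym2.mem_and_mem_iff hbc).1 ⟨Sym2.mem_of_exists_mem_mk_of_notMem h₁ ha,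
      Sym2.mem_of_exists_mem_mk_of_notMem h₃ ha⟩))

namespace SimpleGraph

variable {V : Type*} [DecidableEq V] (G : SimpleGraph V)

theorem exists_mem_forall_of_isClique_lineGraph {t : Finset G.edgeSet}
    (ht : G.lineGraph.IsClique (t : Set G.edgeSet)) (h4 : 4 ≤ t.card) :
    ∃ v, ∀ e ∈ t, v ∈ (e : Sym2 V) := by
  by_contra! h
  have hmeet : ∀ e ∈ t, ∀ e' ∈ t, ∃ v, v ∈ (e : Sym2 V) ∧ v ∈ (e' : Sym2 V) := by
    intro e he e' he'
    by_cases hee' : e = e'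
    · exact hee' ▸ ⟨_, Sym2.out_fst_mem _, Sym2.out_fst_mem _⟩
    · exact (lineGraph_adj_iff_exists.1 (ht he he' hee')).2
  obtain ⟨e₁, he₁⟩ := card_pos.1 (by omega : 0 < t.card)
  obtain ⟨a, b, hab⟩ : ∃ a b, (e₁ : Sym2 V) = s(a, b) :=
    Sym2.inductionOn (e₁ : Sym2 V) fun a b => ⟨a, b, rfl⟩
  obtain ⟨e₂, he₂, hae₂⟩ := h a
  obtain ⟨e₃, he₃, hbe₃⟩ := h b
  have hb₂ : b ∈ (e₂ : Sym2 V) :=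
    Sym2.mem_of_exists_mem_mk_of_notMem (hab ▸ hmeet e₁ he₁ e₂ he₂) hae₂
  have ha₃ : a ∈ (e₃ : Sym2 V) :=
    Sym2.mem_of_exists_mem_mk_of_notMem ((hab.trans Sym2.eq_swap) ▸ hmeet e₁ he₁ e₃ he₃) hbe₃
  obtain ⟨c, hc₂, hc₃⟩ := hmeet e₂ he₂ e₃ he₃
  have hbc : b ≠ c := by rintro rfl; exact hbe₃ hc₃
  have hac : a ≠ c := by rintro rfl; exact hae₂ hc₂
  have he₂c : (e₂ : Sym2 V) = s(b, c) := (Sym2.mem_and_mem_iff hbc).1 ⟨hb₂, hc₂⟩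
  have he₃c : (e₃ : Sym2 V) = s(a, c) := (Sym2.mem_and_mem_iff hac).1 ⟨ha₃, hc₃⟩
  have hsub : t.map (Function.Embedding.subtype _) ⊆ {s(a, b), s(b, c), s(a, c)} := by
    intro x hx
    obtain ⟨e, he, rfl⟩ := mem_map.1 hx
    exact Sym2.mem_triangle_of_exists_mem (by rintro rfl; exact hae₂ hb₂) hbc hac
      (hab ▸ hmeet e₁ he₁ e he) (he₂c ▸ hmeet e₂ he₂ e he) (he₃c ▸ hmeet e₃ he₃ e he)
  have := (card_le_card hsub).trans card_le_three
  rw [card_map] at this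
  omega

variable [Fintype V] [DecidableRel G.Adj]

theorem lineGraph_cliqueFree {n : ℕ} (hn : 4 ≤ n) (hΔ : G.maxDegree < n) :
    G.lineGraph.CliqueFree n := by
  intro t ht
  obtain ⟨v, hv⟩ := G.exists_mem_forall_of_isClique_lineGraph ht.isClique (ht.card_eq ▸ hn)
  have hsub : t.map (Function.Embedding.subtype _) ⊆ G.incidenceFinset v := fun x hx => by
    obtain ⟨e, he, rfl⟩ := mem_map.1 hx
    exact (mem_incidenceFinset _ _ _).2 ⟨e.2, hv e he⟩
  have := card_le_card hsub
  rw [card_map, ht.card_eq, card_incidenceFinset_eq_degree] at this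
  have := G.degree_le_maxDegree v
  omega

theorem lineGraph_degree_le [DecidableRel G.lineGraph.Adj] (e : G.edgeSet) :
    G.lineGraph.degree e ≤ 2 * G.maxDegree - 2 := by
  obtain ⟨e, he⟩ := e
  induction e using Sym2.ind with | h a b => ?_
  have hsub : (G.lineGraph.neighborFinset ⟨s(a, b), he⟩).map (Function.Embedding.subtype _) ⊆
      (G.incidenceFinset a ∪ G.incidenceFinset b).erase s(a, b) := by
    intro e' he'
    obtain ⟨⟨e', he'E⟩, hadj, rfl⟩ := mem_map.1 he'
    rw [mem_neighborFinset, lineGraph_adj_iff_exists] at hadj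
    obtain ⟨hne, v, hv, hv'⟩ := hadj
    refine mem_erase.2 ⟨fun h => hne (Subtype.ext h.symm), ?_⟩
    rcases Sym2.mem_iff.1 hv with rfl | rfl
    · exact mem_union_left _ ((mem_incidenceFinset _ _ _).2 ⟨he'E, hv'⟩)
    · exact mem_union_right _ ((mem_incidenceFinset _ _ _).2 ⟨he'E, hv'⟩)
  have hinter : s(a, b) ∈ G.incidenceFinset a ∩ G.incidenceFinset b :=
    mem_inter.2 ⟨(mem_incidenceFinset _ _ _).2 ⟨he, Sym2.mem_mk_left a b⟩,
      (mem_incidenceFinset _ _ _).2 ⟨he, Sym2.mem_mk_right a b⟩⟩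
  have h₁ := card_le_card hsub
  rw [card_map, card_neighborFinset_eq_degree,
    card_erase_of_mem (mem_union_left _ (mem_inter.1 hinter).1)] at h₁
  have h₂ := card_union_add_card_inter (G.incidenceFinset a) (G.incidenceFinset b)
  have h₃ := card_pos.2 ⟨_, hinter⟩
  rw [card_incidenceFinset_eq_degree, card_incidenceFinset_eq_degree] at h₂
  have := G.degree_le_maxDegree a
  have := G.degree_le_maxDegree b
  omega

end SimpleGraph

theorem stmt_general {V : Type} [Fintype V] (G : SimpleGraph V) [DecidableRel G.Adj] :
    (G.maxDegree ≤ 3 → EdgeGroupChoosable G (G.maxDegree + 1)) ∧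
      (G.maxDegree = 4 → EdgeGroupChoosable G 6) := by
  classical
  have hdeg := G.lineGraph_degree_le
  refine ⟨fun hΔ => ?_, fun hΔ => ?_⟩
  · rcases (by omega : G.maxDegree ≤ 2 ∨ G.maxDegree = 3) with h | h
    · exact groupChoosable_of_degree_lt _ fun e => by have := hdeg e; omega
    · rw [h]
      exact groupChoosable_of_degree_le_of_cliqueFree _ (by norm_num)
        (fun e => by have := hdeg e; omega) (G.lineGraph_cliqueFree (by norm_num) (by omega))
  · exact groupChoosable_of_degree_le_of_cliqueFree _ (by norm_num)
      (fun e => by have := hdeg e; omega) (G.lineGraph_cliqueFree (by norm_num) (by omega))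

/-- If `Δ(G) ≤ 3` then `G` is edge-`(Δ(G)+1)`-group choosable; if `Δ(G) = 4` then `G` is
edge-6-group choosable. -/
theorem stmt {V : Type} [Fintype V] [DecidableEq V] (G : SimpleGraph V) [DecidableRel G.Adj] :
    (G.maxDegree ≤ 3 → EdgeGroupChoosable G (G.maxDegree + 1)) ∧
      (G.maxDegree = 4 → EdgeGroupChoosable G 6) :=
  stmt_general G
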